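/- arXiv:2309.14344 — 2 statements merged into one kernel-verified Lean document; each statement's English description precedes it below -/
import Mathlib

section
/- Let A_1,...,A_k be matrices whose span is closed under commutators (i.e., [A_i,A_j] = Σ_l c_{ij}^l A_l for some constants c_{ij}^l). Then the subspace T = ⋂_{i,j} ker [A_i, A_j] is invariant under each A_s: A_s T ⊆ T. -/
/-!
For `X` in the span `L` of the `A l`, the bracket `⁅X, A s⁆` is a linear combination of the
`⁅A l, A s⁆`, all of which kill `v ∈ T`. Since `L` contains the brackets `⁅A i, A j⁆`,
`⁅A i, A j⁆ (A s v) = ⁅⁅A i, A j⁆, A s⁆ v + A s (⁅A i, A j⁆ v) = 0`.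
-/

open Matrix

namespace Matrix

variable {m K : Type*} [Fintype m] [CommRing K]

theorem mulVec_mulVec_eq_lie_mulVec_add (X Y : Matrix m m K) (v : m → K) :
    X *ᵥ (Y *ᵥ v) = ⁅X, Y⁆ *ᵥ v + Y *ᵥ (X *ᵥ v) := by
  rw [mulVec_mulVec, mulVec_mulVec, ← add_mulVec, Ring.lie_def, sub_add_cancel]

theorem lie_mulVec_eq_zero_of_mem_span {ι : Type*} {A : ι → Matrix m m K} {B X : Matrix m m K}
    {v : m → K} (hA : ∀ l, ⁅A l, B⁆ *ᵥ v = 0) (hX : X ∈ Submodule.span K (Set.range A)) :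
    ⁅X, B⁆ *ᵥ v = 0 := by
  induction hX using Submodule.span_induction with
  | mem _ hY => obtain ⟨l, rfl⟩ := hY; exact hA l
  | zero => simp [Ring.lie_def]
  | add Y Z _ _ hY hZ =>
    rw [Ring.lie_def] at hY hZ ⊢
    rw [add_mul, mul_add, add_sub_add_comm, add_mulVec, hY, hZ, add_zero]
  | smul c Y _ hY =>
    rw [Ring.lie_def] at hY ⊢
    rw [smul_mul_assoc, mul_smul_comm, ← smul_sub, smul_mulVec, hY, smul_zero]

end Matrix

theorem stmt_1 {K : Type*} [Field K] {n k : ℕ}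
    (A : Fin k → Matrix (Fin n) (Fin n) K)
    (hLie : ∀ i j, ∃ c : Fin k → K,
      A i * A j - A j * A i = ∑ l, c l • A l) :
    ∀ s, ∀ v : Fin n → K,
      (∀ i j, (A i * A j - A j * A i).mulVec v = 0) →
      (∀ i j, (A i * A j - A j * A i).mulVec ((A s).mulVec v) = 0) := by
  simp only [← Ring.lie_def] at hLie ⊢
  intro s v hv i j
  have hspan : ⁅A i, A j⁆ ∈ Submodule.span K (Set.range A) := by
    obtain ⟨c, hc⟩ := hLie i j
    exact (Submodule.mem_span_range_iff_exists_fun K).2 ⟨c, hc.symm⟩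
  rw [mulVec_mulVec_eq_lie_mulVec_add, lie_mulVec_eq_zero_of_mem_span (fun l => hv l s) hspan,
    hv i j, mulVec_zero, add_zero]
end

section
/- A common eigenvector of matrices A_1,...,A_k spanning a Lie algebra exists if and only if the matrices restricted to T = ⋂_{i,j} ker[A_i,A_j] have a common eigenvector in T; in particular over an algebraically closed field, a common eigenvector exists if and only if T ≠ 0. -/
/-!
A common eigenvector is killed by every commutator, so it lies in `T`. Conversely, closure of the
span under commutators makes `T` invariant under each `A l`: `[[A i, A j], A l]` is a combination
of the `[A m, A l]`, which vanish on `T`, so for `x ∈ T`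
`[A i, A j] (A l x) = [[A i, A j], A l] x + A l ([A i, A j] x) = 0`. On `T` the `A l` commute,
and commuting operators on a nonzero finite-dimensional space over an algebraically closed field
have a common eigenvector (restrict to an eigenspace of a non-scalar one and induct on the
dimension).
-/

open Module End Set

section CommonEigenvector

variable {K V : Type*} [Field K] [AddCommGroup V] [Module K V]

theorem exists_common_eigenvector_of_restrict {ι : Type*} {f : ι → End K V} {p : Submodule K V}
    (hp : ∀ i, MapsTo (f i) p p) {w : p} (hw0 : w ≠ 0)
    (hw : ∀ i, ∃ μ : K, (f i).restrict (hp i) w = μ • w) :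
    ∃ v : V, v ≠ 0 ∧ ∀ i, ∃ μ : K, f i v = μ • v :=
  ⟨w, by simpa using hw0, fun i => (hw i).imp fun _ h => congrArg Subtype.val h⟩

theorem exists_common_eigenvector_of_commute [IsAlgClosed K] [FiniteDimensional K V]
    [Nontrivial V] {ι : Type*} (f : ι → End K V) (hf : ∀ i j, Commute (f i) (f j)) :
    ∃ v : V, v ≠ 0 ∧ ∀ i, ∃ μ : K, f i v = μ • v := by
  induction hd : finrank K V using Nat.strong_induction_on generalizing V with
  | _ d ih =>
    by_cases hscalar : ∀ i, ∃ μ : K, ∀ v, f i v = μ • v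
    · obtain ⟨v, hv⟩ := exists_ne (0 : V)
      exact ⟨v, hv, fun i => (hscalar i).imp fun μ h => h v⟩
    push Not at hscalar
    obtain ⟨i, hi⟩ := hscalar
    obtain ⟨μ, hμ⟩ := exists_eigenvalue (f i)
    let W := (f i).eigenspace μ
    have : Nontrivial W := Submodule.nontrivial_iff_ne_bot.mpr hμ
    have hW : ∀ j, MapsTo (f j) W W := fun j => mapsTo_genEigenspace_of_comm (hf i j) μ 1
    have hWlt : finrank K W < d := by
      obtain ⟨v, hv⟩ := hi μ
      refine hd ▸ Submodule.finrank_lt fun hWtop => hv ?_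
      exact mem_eigenspace_iff.mp (hWtop ▸ Submodule.mem_top : v ∈ W)
    obtain ⟨w, hw0, hw⟩ := ih _ hWlt (fun j => (f j).restrict (hW j))
      (fun j l => LinearMap.restrict_commute (hf j l) _ _) rfl
    exact exists_common_eigenvector_of_restrict hW hw0 hw

theorem lie_apply_eq_zero_of_apply_eq_smul {f g : End K V} {v : V} {a b : K}
    (hf : f v = a • v) (hg : g v = b • v) : ⁅f, g⁆ v = 0 := by
  rw [Ring.lie_def, LinearMap.sub_apply, mul_apply, mul_apply, hf, hg, map_smul, map_smul, hf, hg,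
    smul_comm, sub_self]

end CommonEigenvector

section CommutatorKernel

variable {K V ι : Type*} [Field K] [AddCommGroup V] [Module K V] (f : ι → End K V)

/-- The subspace `T` of the paper. -/
def commutatorKernel : Submodule K V :=
  ⨅ i, ⨅ j, LinearMap.ker ⁅f i, f j⁆

variable {f}

theorem mem_commutatorKernel {v : V} : v ∈ commutatorKernel f ↔ ∀ i j, ⁅f i, f j⁆ v = 0 := by
  simp only [commutatorKernel, Submodule.mem_iInf, LinearMap.mem_ker]

theorem mem_commutatorKernel_of_common_eigenvector {v : V} (hv : ∀ i, ∃ μ : K, f i v = μ • v) :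
    v ∈ commutatorKernel f :=
  mem_commutatorKernel.mpr fun i j =>
    let ⟨_, ha⟩ := hv i
    let ⟨_, hb⟩ := hv j
    lie_apply_eq_zero_of_apply_eq_smul ha hb

theorem mapsTo_commutatorKernel [Fintype ι]
    (hLie : ∀ i j, ∃ c : ι → K, ⁅f i, f j⁆ = ∑ l, c l • f l) (l : ι) :
    MapsTo (f l) (commutatorKernel f) (commutatorKernel f) := by
  intro x hx
  rw [SetLike.mem_coe, mem_commutatorKernel] at hx ⊢
  intro i j
  obtain ⟨c, hc⟩ := hLie i j
  have hbracket : ⁅⁅f i, f j⁆, f l⁆ x = 0 := by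
    have hsum : ⁅⁅f i, f j⁆, f l⁆ = ∑ m, c m • ⁅f m, f l⁆ := by
      simp only [hc, Ring.lie_def, Finset.sum_mul, Finset.mul_sum, ← Finset.sum_sub_distrib,
        smul_mul_assoc, mul_smul_comm, smul_sub]
    rw [hsum, LinearMap.sum_apply]
    exact Finset.sum_eq_zero fun m _ => by rw [LinearMap.smul_apply, hx, smul_zero]
  have hcomm : ⁅f i, f j⁆ (f l x) = ⁅⁅f i, f j⁆, f l⁆ x + f l (⁅f i, f j⁆ x) := by
    rw [Ring.lie_def (⁅f i, f j⁆), LinearMap.sub_apply, mul_apply, mul_apply, sub_add_cancel]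
  rw [hcomm, hbracket, hx, map_zero, add_zero]

theorem commute_restrict_commutatorKernel
    (hT : ∀ l, MapsTo (f l) (commutatorKernel f) (commutatorKernel f)) (i j : ι) :
    Commute ((f i).restrict (hT i)) ((f j).restrict (hT j)) :=
  LinearMap.ext fun x => Subtype.ext <| by
    have hx := mem_commutatorKernel.mp x.2 i j
    rwa [Ring.lie_def, LinearMap.sub_apply, sub_eq_zero] at hx

theorem exists_common_eigenvector_iff_commutatorKernel_ne_bot [IsAlgClosed K]
    [FiniteDimensional K V] [Fintype ι] (hLie : ∀ i j, ∃ c : ι → K, ⁅f i, f j⁆ = ∑ l, c l • f l) :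
    (∃ v : V, v ≠ 0 ∧ ∀ i, ∃ μ : K, f i v = μ • v) ↔ commutatorKernel f ≠ ⊥ := by
  rw [Submodule.ne_bot_iff]
  constructor
  · rintro ⟨v, hv0, hv⟩
    exact ⟨v, mem_commutatorKernel_of_common_eigenvector hv, hv0⟩
  · rintro ⟨v, hvT, hv0⟩
    have : Nontrivial (commutatorKernel f) := ⟨⟨⟨v, hvT⟩, 0, by simpa using hv0⟩⟩
    have hT := mapsTo_commutatorKernel hLie
    obtain ⟨w, hw0, hw⟩ := exists_common_eigenvector_of_commute (fun l => (f l).restrict (hT l))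
      (commute_restrict_commutatorKernel hT)
    exact exists_common_eigenvector_of_restrict hT hw0 hw

end CommutatorKernel

theorem stmt_6 {K : Type*} [Field K] [IsAlgClosed K] {n k : ℕ}
    (A : Fin k → Matrix (Fin n) (Fin n) K)
    (hLie : ∀ i j, ∃ c : Fin k → K,
      A i * A j - A j * A i = ∑ l, c l • A l) :
    ((∃ v : Fin n → K, v ≠ 0 ∧ ∀ i, ∃ lam : K, (A i).mulVec v = lam • v) ↔
      (∃ v : Fin n → K, v ≠ 0 ∧ (∀ i j, (A i * A j - A j * A i).mulVec v = 0) ∧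
        ∀ i, ∃ lam : K, (A i).mulVec v = lam • v)) ∧
    ((∃ v : Fin n → K, v ≠ 0 ∧ ∀ i, ∃ lam : K, (A i).mulVec v = lam • v) ↔
      (∃ v : Fin n → K, v ≠ 0 ∧ ∀ i j, (A i * A j - A j * A i).mulVec v = 0)) := by
  let f : Fin k → End K (Fin n → K) := fun i => Matrix.toLinAlgEquiv' (A i)
  have hbracket : ∀ i j, ⁅f i, f j⁆ = Matrix.toLinAlgEquiv' (A i * A j - A j * A i) := by
    simp [f, Ring.lie_def]
  have hLie' : ∀ i j, ∃ c : Fin k → K, ⁅f i, f j⁆ = ∑ l, c l • f l := fun i j =>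
    (hLie i j).imp fun c hc => by simp [hbracket, hc, f]
  have hT : ∀ v, (∀ i j, (A i * A j - A j * A i).mulVec v = 0) ↔ v ∈ commutatorKernel f := by
    simp [mem_commutatorKernel, hbracket, Matrix.sub_mulVec]
  have hcommon : (∃ v, v ≠ 0 ∧ ∀ i, ∃ lam : K, (A i).mulVec v = lam • v) ↔
      commutatorKernel f ≠ ⊥ :=
    exists_common_eigenvector_iff_commutatorKernel_ne_bot hLie'
  refine ⟨⟨fun ⟨v, hv0, hv⟩ => ?_, fun ⟨v, hv0, _, hv⟩ => ⟨v, hv0, hv⟩⟩, hcommon.trans ?_⟩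
  · exact ⟨v, hv0, (hT v).mpr (mem_commutatorKernel_of_common_eigenvector hv), hv⟩
  · simp only [hT, Submodule.ne_bot_iff, and_comm]
end
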